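/- In the setting of the empirical-flow equation, any solution t ↦ s(t) satisfies, for all t in its interval of definition, the competition bounds −log(s(t)/s_m)/(2 R_M (N−1)) ≤ Ĉ_N(s(t), x, μ̂_N(t)) ≤ N/(N−1) − log(s(t)/s_m)/(2 R_M (N−1)). -/

import Mathlib

/-!
Against the empirical measure, `Ĉ_N(s, x, μ̂_N(t))` equals
`(∑_j C(s, s_j(t), |x - x_j|) - log(s/s_m)/(2R_M)) / (N - 1)`: the self-interaction
`C(s, s, 0)` is `log(s/s_m)/(2R_M)` because `tanh 0 = 0`. Since `0 ≤ C(s, s', d) < 1` whenever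
`s' ∈ [s_m, s_m e^{R_M}]`, both bounds hold for every `s` as soon as all
`s_j(t)` lie in that interval.

The interval is invariant under the particle system. On its lower face the competition index
is `< 1`, so `ds_i/dt > 0`; on its upper face the index is `≥ 0` and `log(S_i/s_m) < R_M`, so
`ds_i/dt < 0`. So no coordinate can be the first to leave it; closed induction on `[0, T]`
makes this precise.
-/

open MeasureTheory Set

/-- The pairwise competition potential
`C(s, s', d) = log(s'/s_m) / (2 R_M (1 + d²/σ_x²)) · (1 + tanh(log(s'/s)/σ_r))`. -/
noncomputable def pot (sm RM σx σr s s' d : ℝ) : ℝ :=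
  Real.log (s' / sm) / (2 * RM * (1 + d ^ 2 / σx ^ 2)) *
    (1 + Real.tanh (Real.log (s' / s) / σr))

/-- The competition index `C_i^N(t) = (1/(N-1)) Σ_{j≠i} C(s_i(t), s_j(t), |x_i - x_j|)`. -/
noncomputable def cIdx (sm RM σx σr : ℝ) {N : ℕ}
    (x : Fin N → EuclideanSpace ℝ (Fin 2)) (s : Fin N → ℝ → ℝ) (i : Fin N) (t : ℝ) : ℝ :=
  (1 / ((N : ℝ) - 1)) *
    ∑ j ∈ Finset.univ.erase i, pot sm RM σx σr (s i t) (s j t) (dist (x i) (x j))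

/-- `s : Fin N → ℝ → ℝ` is a global solution (on `ℝ₊`) of the competition system
`ds_i/dt = γ_i s_i (log(S_i/s_m)(1 − C_i^N(t)) − log(s_i/s_m))`, `s_i(0) = s_i^0`. -/
def IsCompetitionSol (sm RM σx σr : ℝ) {N : ℕ} (s0 : Fin N → ℝ)
    (x : Fin N → EuclideanSpace ℝ (Fin 2)) (Sa γ : Fin N → ℝ) (s : Fin N → ℝ → ℝ) : Prop :=
  ∀ i, s i 0 = s0 i ∧ ∀ t, 0 ≤ t →
    HasDerivWithinAt (s i)
      (γ i * s i t * (Real.log (Sa i / sm) * (1 - cIdx sm RM σx σr x s i t)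
        - Real.log (s i t / sm)))
      (Set.Ici 0) t


open scoped ENNReal

/-- The population empirical measure
`μ̂_N(t) = (1/N) Σ_i δ_{(s_i(t), x_i, S_i, γ_i)}` on `ℝ × ℝ² × ℝ × ℝ`. -/
noncomputable def empMeas {N : ℕ} (x : Fin N → EuclideanSpace ℝ (Fin 2))
    (Sa γ : Fin N → ℝ) (s : Fin N → ℝ → ℝ) (t : ℝ) :
    Measure (ℝ × EuclideanSpace ℝ (Fin 2) × ℝ × ℝ) :=
  (N : ℝ≥0∞)⁻¹ • ∑ i : Fin N, Measure.dirac (s i t, x i, Sa i, γ i)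

/-- The mean competition potential
`Ĉ_N(s, x, μ) = (N/(N−1)) ∫ C(s, s', |x−x'|) dμ^{s,x}(s',x') − C(s,s,0)/(N−1)`,
where `μ^{s,x}` is the `(s,x)`-marginal of `μ`. -/
noncomputable def hatC (sm RM σx σr : ℝ) (N : ℕ) (s : ℝ) (x : EuclideanSpace ℝ (Fin 2))
    (μ : Measure (ℝ × EuclideanSpace ℝ (Fin 2) × ℝ × ℝ)) : ℝ :=
  ((N : ℝ) / ((N : ℝ) - 1)) *
      (∫ p, pot sm RM σx σr s p.1 (dist x p.2)
        ∂(Measure.map (fun z : ℝ × EuclideanSpace ℝ (Fin 2) × ℝ × ℝ => (z.1, z.2.1)) μ))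
    - pot sm RM σx σr s s 0 / ((N : ℝ) - 1)

open Filter Topology

section RightDerivative

variable {f : ℝ → ℝ} {f' x : ℝ}

theorem HasDerivWithinAt.eventually_gt_right (hf : HasDerivWithinAt f f' (Ioi x) x)
    (hf' : 0 < f') : ∀ᶠ z in 𝓝[>] x, f x < f z := by
  filter_upwards [(hasDerivWithinAt_iff_tendsto_slope' (lt_irrefl x)).1 hf
    (isOpen_Ioi.mem_nhds hf'), self_mem_nhdsWithin] with z hz hxz
  exact (slope_pos_iff_of_le (le_of_lt hxz)).1 hz

theorem HasDerivWithinAt.eventually_ge_right {a : ℝ} (hf : HasDerivWithinAt f f' (Ioi x) x)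
    (hx : a ≤ f x) (ha : f x = a → 0 < f') : ∀ᶠ z in 𝓝[>] x, a ≤ f z := by
  rcases hx.eq_or_lt with hxa | hxa
  · filter_upwards [hf.eventually_gt_right (ha hxa.symm)] with z hz
    exact hxa.le.trans hz.le
  · filter_upwards [hf.continuousWithinAt.eventually (isOpen_Ioi.mem_nhds hxa)] with z hz
    exact le_of_lt hz

theorem HasDerivWithinAt.eventually_mem_Icc_right {a b : ℝ}
    (hf : HasDerivWithinAt f f' (Ioi x) x) (hx : f x ∈ Icc a b) (ha : f x = a → 0 < f')
    (hb : f x = b → f' < 0) : ∀ᶠ z in 𝓝[>] x, f z ∈ Icc a b := by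
  have hb' : ∀ᶠ z in 𝓝[>] x, -b ≤ -f z :=
    hf.neg.eventually_ge_right (neg_le_neg hx.2) fun h => neg_pos.2 (hb (neg_inj.1 h))
  filter_upwards [hf.eventually_ge_right hx.1 ha, hb'] with z hza hzb
  exact ⟨hza, neg_le_neg_iff.1 hzb⟩

end RightDerivative

theorem forall_mem_Icc_of_inward_hasDerivWithinAt {ι : Type*} [Finite ι] {f f' : ι → ℝ → ℝ}
    {a b : ℝ}
    (hf : ∀ i, ∀ t, 0 ≤ t → HasDerivWithinAt (f i) (f' i t) (Ici 0) t)
    (h0 : ∀ i, f i 0 ∈ Icc a b)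
    (ha : ∀ t, 0 ≤ t → (∀ j, f j t ∈ Icc a b) → ∀ i, f i t = a → 0 < f' i t)
    (hb : ∀ t, 0 ≤ t → (∀ j, f j t ∈ Icc a b) → ∀ i, f i t = b → f' i t < 0) :
    ∀ t, 0 ≤ t → ∀ i, f i t ∈ Icc a b := by
  set S := (fun t i => f i t) ⁻¹' univ.pi fun _ => Icc a b
  have hS : ∀ t, t ∈ S ↔ ∀ i, f i t ∈ Icc a b := fun t => mem_univ_pi
  intro T hT
  suffices Icc 0 T ⊆ S from (hS T).1 (this ⟨hT, le_rfl⟩)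
  refine IsClosed.Icc_subset_of_forall_mem_nhdsWithin ?_ ((hS 0).2 h0) ?_
  · have hcont : ContinuousOn (fun t i => f i t) (Icc 0 T) := continuousOn_pi.2 fun i t ht =>
      ((hf i t ht.1).continuousWithinAt).mono Icc_subset_Ici_self
    rw [inter_comm]
    exact hcont.preimage_isClosed_of_isClosed isClosed_Icc
      (isClosed_set_pi fun _ _ => isClosed_Icc)
  · rintro t ⟨htS, ht0, -⟩
    have hin := (hS t).1 htS
    have hev : ∀ i, ∀ᶠ z in 𝓝[>] t, f i z ∈ Icc a b := fun i =>
      ((hf i t ht0).mono fun z hz => ht0.trans (le_of_lt hz)).eventually_mem_Icc_right (hin i)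
        (ha t ht0 hin i) (hb t ht0 hin i)
    filter_upwards [eventually_all.2 hev] with z hz
    exact (hS z).2 hz

section Potential

variable {sm RM σx σr : ℝ}

theorem pot_self (a : ℝ) : pot sm RM σx σr a a 0 = Real.log (a / sm) / (2 * RM) := by
  rcases eq_or_ne a 0 with rfl | ha <;> simp [pot, *]

theorem pot_nonneg (hsm : 0 < sm) (hRM : 0 < RM) {s s' : ℝ} (hs' : sm ≤ s') (d : ℝ) :
    0 ≤ pot sm RM σx σr s s' d := by
  have hT := Real.neg_one_lt_tanh (Real.log (s' / s) / σr)
  have hL := Real.log_nonneg ((one_le_div hsm).2 hs')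
  unfold pot
  exact mul_nonneg (div_nonneg hL (by positivity)) (by linarith)

theorem pot_lt_one (hsm : 0 < sm) (hRM : 0 < RM) {s s' : ℝ} (hs' : 0 < s')
    (hs'_le : s' ≤ sm * Real.exp RM) (d : ℝ) : pot sm RM σx σr s s' d < 1 := by
  have hT := Real.tanh_lt_one (Real.log (s' / s) / σr)
  have hT' := Real.neg_one_lt_tanh (Real.log (s' / s) / σr)
  have hL : Real.log (s' / sm) ≤ RM := by
    rw [Real.log_le_iff_le_exp (div_pos hs' hsm), div_le_iff₀ hsm, mul_comm]
    exact hs'_le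
  have hd : 0 ≤ d ^ 2 / σx ^ 2 := by positivity
  unfold pot
  rw [div_mul_eq_mul_div, div_lt_one (by positivity)]
  nlinarith

end Potential

theorem cIdx_nonneg {sm RM σx σr : ℝ} (hsm : 0 < sm) (hRM : 0 < RM) {N : ℕ}
    (x : Fin N → EuclideanSpace ℝ (Fin 2)) {s : Fin N → ℝ → ℝ} {t : ℝ}
    (hs : ∀ j, sm ≤ s j t) (i : Fin N) : 0 ≤ cIdx sm RM σx σr x s i t := by
  have : (1 : ℝ) ≤ N := Nat.one_le_cast.2 i.pos
  unfold cIdx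
  exact mul_nonneg (by rw [one_div_nonneg]; linarith)
    (Finset.sum_nonneg fun j _ => pot_nonneg hsm hRM (hs j) _)

theorem cIdx_lt_one {sm RM σx σr : ℝ} (hsm : 0 < sm) (hRM : 0 < RM) {N : ℕ} (hN : 1 < N)
    (x : Fin N → EuclideanSpace ℝ (Fin 2)) {s : Fin N → ℝ → ℝ} {t : ℝ}
    (hs : ∀ j, s j t ∈ Icc sm (sm * Real.exp RM)) (i : Fin N) :
    cIdx sm RM σx σr x s i t < 1 := by
  have hN1 : (0 : ℝ) < N - 1 := by
    have : (1 : ℝ) < N := by exact_mod_cast hN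
    linarith
  have hcard : (Finset.univ.erase i).card = N - 1 := by simp
  have hsum : ∑ j ∈ Finset.univ.erase i, pot sm RM σx σr (s i t) (s j t) (dist (x i) (x j))
      < ∑ _j ∈ Finset.univ.erase i, (1 : ℝ) :=
    Finset.sum_lt_sum_of_nonempty (Finset.card_pos.1 (by omega)) fun j _ =>
      pot_lt_one hsm hRM (hsm.trans_le (hs j).1) (hs j).2 _
  rw [Finset.sum_const, hcard, nsmul_one, Nat.cast_sub hN.le, Nat.cast_one] at hsum
  unfold cIdx
  rw [one_div, inv_mul_lt_iff₀ hN1, mul_one]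
  exact hsum

theorem IsCompetitionSol.mem_Icc {sm RM σx σr : ℝ} (hsm : 0 < sm) (hRM : 0 < RM) {N : ℕ}
    (hN : 1 < N) {s0 Sa γ : Fin N → ℝ} {x : Fin N → EuclideanSpace ℝ (Fin 2)}
    (hinit : ∀ i, sm < s0 i ∧ s0 i < Sa i) (hS : ∀ i, sm < Sa i ∧ Sa i < sm * Real.exp RM)
    (hγ : ∀ i, 0 < γ i) {s : Fin N → ℝ → ℝ} (hs : IsCompetitionSol sm RM σx σr s0 x Sa γ s) :
    ∀ t, 0 ≤ t → ∀ i, s i t ∈ Icc sm (sm * Real.exp RM) := by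
  have hlogS : ∀ i, 0 < Real.log (Sa i / sm) ∧ Real.log (Sa i / sm) < RM := fun i =>
    ⟨Real.log_pos ((one_lt_div hsm).2 (hS i).1), by
      rw [Real.log_lt_iff_lt_exp (div_pos (hsm.trans (hS i).1) hsm), div_lt_iff₀ hsm, mul_comm]
      exact (hS i).2⟩
  refine forall_mem_Icc_of_inward_hasDerivWithinAt (fun i => (hs i).2) (fun i => ?_) ?_ ?_
  · rw [(hs i).1]
    exact ⟨(hinit i).1.le, ((hinit i).2.trans (hS i).2).le⟩
  · intro t _ hbox i hi
    have hC := cIdx_lt_one (σx := σx) (σr := σr) hsm hRM hN x hbox i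
    rw [hi, div_self hsm.ne', Real.log_one, sub_zero]
    exact mul_pos (mul_pos (hγ i) hsm) (mul_pos (hlogS i).1 (by linarith))
  · intro t _ hbox i hi
    have hC := cIdx_nonneg (σx := σx) (σr := σr) hsm hRM x (fun j => (hbox j).1) i
    rw [hi, mul_div_cancel_left₀ _ hsm.ne', Real.log_exp]
    refine mul_neg_of_pos_of_neg (mul_pos (hγ i) (mul_pos hsm (Real.exp_pos RM))) ?_
    nlinarith [hlogS i]

theorem hatC_empMeas (sm RM σx σr : ℝ) {N : ℕ} (hN : N ≠ 0)
    (x : Fin N → EuclideanSpace ℝ (Fin 2)) (Sa γ : Fin N → ℝ) (s : Fin N → ℝ → ℝ) (t a : ℝ)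
    (x' : EuclideanSpace ℝ (Fin 2)) :
    hatC sm RM σx σr N a x' (empMeas x Sa γ s t) =
      (∑ j, pot sm RM σx σr a (s j t) (dist x' (x j))) / (N - 1)
        - Real.log (a / sm) / (2 * RM * (N - 1)) := by
  have hproj : Measurable fun z : ℝ × EuclideanSpace ℝ (Fin 2) × ℝ × ℝ => (z.1, z.2.1) := by
    fun_prop
  have hmarg : (empMeas x Sa γ s t).map (fun z => (z.1, z.2.1)) =
      (N : ℝ≥0∞)⁻¹ • ∑ j, Measure.dirac (s j t, x j) := by
    simp only [empMeas, Measure.map_smul, Measure.map_finset_sum' hproj.aemeasurable,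
      Measure.map_dirac' hproj]
  rw [hatC, hmarg, integral_smul_measure,
    integral_finsetSum_measure fun j _ => integrable_dirac enorm_lt_top, pot_self]
  simp only [integral_dirac, ENNReal.toReal_inv, ENNReal.toReal_natCast, smul_eq_mul]
  field_simp

theorem stmt_5_general (sm RM σx σr : ℝ) (hsm : 0 < sm) (hRM : 0 < RM)
    (N : ℕ) (hN : 1 < N) (s0 Sa γ : Fin N → ℝ) (x : Fin N → EuclideanSpace ℝ (Fin 2))
    (hinit : ∀ i, sm < s0 i ∧ s0 i < Sa i)
    (hS : ∀ i, sm < Sa i ∧ Sa i < sm * Real.exp RM)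
    (hγ : ∀ i, 0 < γ i)
    (s : Fin N → ℝ → ℝ) (hs : IsCompetitionSol sm RM σx σr s0 x Sa γ s)
    (x' : EuclideanSpace ℝ (Fin 2))
    (J : Set ℝ) (hJsub : J ⊆ Set.Ici 0)
    (σ : ℝ → ℝ) :
    ∀ t ∈ J,
      -(Real.log (σ t / sm)) / (2 * RM * ((N : ℝ) - 1))
          ≤ hatC sm RM σx σr N (σ t) x' (empMeas x Sa γ s t) ∧
      hatC sm RM σx σr N (σ t) x' (empMeas x Sa γ s t)
          ≤ (N : ℝ) / ((N : ℝ) - 1) - Real.log (σ t / sm) / (2 * RM * ((N : ℝ) - 1)) := by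
  intro t ht
  have hbox := hs.mem_Icc hsm hRM hN hinit hS hγ t (hJsub ht)
  have hN1 : (0 : ℝ) < N - 1 := by
    have : (1 : ℝ) < N := by exact_mod_cast hN
    linarith
  set P := ∑ j, pot sm RM σx σr (σ t) (s j t) (dist x' (x j))
  have hP0 : 0 ≤ P / (N - 1) :=
    div_nonneg (Finset.sum_nonneg fun j _ => pot_nonneg hsm hRM (hbox j).1 _) hN1.le
  have hPN : P / (N - 1) ≤ N / (N - 1) := by
    refine div_le_div_of_nonneg_right ?_ hN1.le
    calc P ≤ ∑ _j : Fin N, (1 : ℝ) := Finset.sum_le_sum fun j _ =>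
          (pot_lt_one hsm hRM (hsm.trans_le (hbox j).1) (hbox j).2 _).le
      _ = N := by simp
  rw [hatC_empMeas sm RM σx σr (by omega), neg_div]
  constructor <;> linarith

/-- along any solution of the empirical-flow equation, on its interval of
definition, the competition term `Ĉ_N` satisfies
`−log(s(t)/s_m)/(2R_M(N−1)) ≤ Ĉ_N(s(t), x, μ̂_N(t)) ≤ N/(N−1) − log(s(t)/s_m)/(2R_M(N−1))`. -/
theorem stmt_5 (sm RM σx σr : ℝ) (hsm : 0 < sm) (hRM : 0 < RM) (hσx : 0 < σx) (hσr : 0 < σr)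
    (N : ℕ) (hN : 1 < N) (s0 Sa γ : Fin N → ℝ) (x : Fin N → EuclideanSpace ℝ (Fin 2))
    (hinit : ∀ i, sm < s0 i ∧ s0 i < Sa i)
    (hS : ∀ i, sm < Sa i ∧ Sa i < sm * Real.exp RM)
    (hγ : ∀ i, 0 < γ i)
    (s : Fin N → ℝ → ℝ) (hs : IsCompetitionSol sm RM σx σr s0 x Sa γ s)
    (s0' : ℝ) (x' : EuclideanSpace ℝ (Fin 2)) (S' γ' : ℝ)
    (h1 : sm < s0') (h2 : s0' < S') (h3 : sm < S') (h4 : S' < sm * Real.exp RM) (h5 : 0 ≤ γ')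
    (J : Set ℝ) (hJ0 : (0 : ℝ) ∈ J) (hJsub : J ⊆ Set.Ici 0) (hJconn : J.OrdConnected)
    (σ : ℝ → ℝ) (hσ0 : σ 0 = s0')
    (hσ : ∀ t ∈ J,
      HasDerivWithinAt σ
        (γ' * σ t * (Real.log (S' / sm) *
            (1 - hatC sm RM σx σr N (σ t) x' (empMeas x Sa γ s t))
          - Real.log (σ t / sm))) J t) :
    ∀ t ∈ J,
      -(Real.log (σ t / sm)) / (2 * RM * ((N : ℝ) - 1))
          ≤ hatC sm RM σx σr N (σ t) x' (empMeas x Sa γ s t) ∧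
      hatC sm RM σx σr N (σ t) x' (empMeas x Sa γ s t)
          ≤ (N : ℝ) / ((N : ℝ) - 1) - Real.log (σ t / sm) / (2 * RM * ((N : ℝ) - 1)) :=
  stmt_5_general sm RM σx σr hsm hRM N hN s0 Sa γ x hinit hS hγ s hs x' J hJsub σ
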